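/- arXiv:math/0409056 — 3 statements merged into one kernel-verified Lean document; each statement's English description precedes it below -/
import Mathlib

section
/- Let X be a finite set of points in P^{n_1} × ⋯ × P^{n_k} with Hilbert function H_X. If there exists l ∈ {1,...,k} and j ∈ N^k with j - 2e_l ∈ N^k such that H_X(j) = H_X(j - e_l) = H_X(j - 2e_l), then the defining ideal I_X has no minimal generator of degree j; equivalently, (I_X)_j = R_{e_l}·(I_X)_{j - e_l}. -/
/-!
Evaluating at the points identifies `H_X(d)` with the rank of the evaluation map `R_d → K^s`.
Choose a linear form `L` of degree `e_l` vanishing at none of the points. Evaluation after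
multiplication by `L` is evaluation rescaled pointwise by the nonzero values of `L`, so the equality
`H_X(d + e_l) = H_X(d)` says exactly that `R_{d+e_l} = L·R_d + (I_X)_{d+e_l}`. Taking
`d = j - 2e_l` and using `R_j = R_{e_l}·R_{j-e_l}`, every `h ∈ (I_X)_j` becomes `L·q + r` with
`q ∈ R_{j-e_l}` and `r ∈ R_{e_l}·(I_X)_{j-e_l}`. Then `L·q ∈ I_X`, hence `q ∈ I_X` because `L`
does not vanish at any point, and `L·q ∈ R_{e_l}·(I_X)_{j-e_l}`.
-/

open MvPolynomial

namespace MultiProjPoints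

/-- The variable set of the multigraded coordinate ring of
`ℙ^{n 0} × ⋯ × ℙ^{n (k-1)}`: variables `x_{i,j}` with `i : Fin k`, `0 ≤ j ≤ n i`. -/
abbrev Var (k : ℕ) (n : Fin k → ℕ) := Σ i : Fin k, Fin (n i + 1)

/-- The `ℕ^k`-grading weight: `deg x_{i,j} = e_i`. -/
def wt (k : ℕ) (n : Fin k → ℕ) : Var k n → (Fin k → ℕ) := fun v => Pi.single v.1 1

/-- The `i`-th standard basis vector of `ℕ^k`. -/
def e {k : ℕ} (l : Fin k) : Fin k → ℕ := Pi.single l 1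

variable (K : Type) [Field K]

/-- The graded piece `R_d` of the `ℕ^k`-graded polynomial ring. -/
noncomputable def piece (k : ℕ) (n : Fin k → ℕ) (d : Fin k → ℕ) :
    Submodule K (MvPolynomial (Var k n) K) :=
  weightedHomogeneousSubmodule K (wt k n) d

/-- `N(d) = ∏ binom (n i + d i) (d i)`, the dimension of `R_d`. -/
def NN (k : ℕ) (n : Fin k → ℕ) (d : Fin k → ℕ) : ℕ := ∏ i, (n i + d i).choose (d i)

/-- A (representative of a) point of `ℙ^{n 0} × ⋯ × ℙ^{n (k-1)}`. -/
def PointRep (k : ℕ) (n : Fin k → ℕ) := (i : Fin k) → Fin (n i + 1) → K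

/-- A valid representative: every coordinate block is nonzero. -/
def IsRep {k : ℕ} {n : Fin k → ℕ} (P : PointRep K k n) : Prop := ∀ i, P i ≠ 0

/-- Two representatives define the same point of multi-projective space. -/
def ProjEq {k : ℕ} {n : Fin k → ℕ} (P Q : PointRep K k n) : Prop :=
  ∀ i, ∃ c : K, c ≠ 0 ∧ P i = c • Q i

/-- A tuple of representatives giving `s` distinct points. -/
def SPoints {k : ℕ} {n : Fin k → ℕ} {s : ℕ} (P : Fin s → PointRep K k n) : Prop :=
  (∀ a, IsRep K (P a)) ∧ ∀ a b, a ≠ b → ¬ ProjEq K (P a) (P b)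

/-- The defining ideal `I_X` of the set of points: all polynomials vanishing on
the multi-cone over the points, i.e. the intersection of the point ideals. -/
noncomputable def idealOfPoints {k : ℕ} {n : Fin k → ℕ} {s : ℕ}
    (P : Fin s → PointRep K k n) : Ideal (MvPolynomial (Var k n) K) :=
  ⨅ (a : Fin s), ⨅ (c : Fin k → K),
    RingHom.ker (eval (fun v : Var k n => c v.1 * P a v.1 v.2))

/-- The degree-`d` piece `I_d` of an ideal, as a `K`-subspace. -/
noncomputable def idealPiece {k : ℕ} {n : Fin k → ℕ}
    (I : Ideal (MvPolynomial (Var k n) K)) (d : Fin k → ℕ) :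
    Submodule K (MvPolynomial (Var k n) K) :=
  (Submodule.restrictScalars K I) ⊓ piece K k n d

/-- The multigraded Hilbert function of `X`:
`H_X(d) = dim (R/I_X)_d = dim R_d - dim (I_X)_d`. -/
noncomputable def hilbert {k : ℕ} {n : Fin k → ℕ} {s : ℕ}
    (P : Fin s → PointRep K k n) (d : Fin k → ℕ) : ℕ :=
  NN k n d - Module.finrank K (idealPiece K (idealOfPoints K P) d)

/-- Generic position: `s` distinct points whose Hilbert function is maximal. -/
def GenericPosition {k : ℕ} {n : Fin k → ℕ} {s : ℕ} (P : Fin s → PointRep K k n) : Prop :=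
  SPoints K P ∧ ∀ d : Fin k → ℕ, hilbert K P d = min (NN k n d) s

/-- `R_{e_l}·V`: the span of all products of a variable of degree `e_l`
with an element of `V`. -/
noncomputable def mulSpan {k : ℕ} {n : Fin k → ℕ} (l : Fin k)
    (V : Submodule K (MvPolynomial (Var k n) K)) :
    Submodule K (MvPolynomial (Var k n) K) :=
  Submodule.span K {g | ∃ (m : Fin (n l + 1)) (f : MvPolynomial (Var k n) K),
    f ∈ V ∧ g = X (⟨l, m⟩ : Var k n) * f}

/-- `D = min { i ∈ ℕ^k | N(i) > s }` (minimal elements for the componentwise order). -/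
def Dset (k : ℕ) (n : Fin k → ℕ) (s : ℕ) : Set (Fin k → ℕ) :=
  {i | s < NN k n i ∧ ∀ j : Fin k → ℕ, s < NN k n j → j ≤ i → j = i}

/-- The irrelevant maximal ideal of `R`, generated by all the variables. -/
noncomputable def irrelevant (k : ℕ) (n : Fin k → ℕ) : Ideal (MvPolynomial (Var k n) K) :=
  Ideal.span (Set.range (X : Var k n → MvPolynomial (Var k n) K))

section Grading

variable {K} {k : ℕ} {n : Fin k → ℕ}

lemma weight_wt_apply (μ : Var k n →₀ ℕ) (i : Fin k) :
    Finsupp.weight (wt k n) μ i = ∑ m : Fin (n i + 1), μ ⟨i, m⟩ := by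
  classical
  rw [Finsupp.weight_apply, Finsupp.sum_fintype _ _ (by simp), Finset.sum_apply,
    ← Finset.univ_sigma_univ, Finset.sum_sigma,
    Finset.sum_eq_single i (fun b _ hb => by simp [wt, Pi.single_eq_of_ne' hb]) (by simp)]
  simp [wt]

lemma X_mem_piece (v : Var k n) : (X v : MvPolynomial (Var k n) K) ∈ piece K k n (e v.1) :=
  isWeightedHomogeneous_X K (wt k n) v

lemma piece_eq_span (d : Fin k → ℕ) :
    piece K k n d = Submodule.span K
      ((fun μ => monomial μ (1 : K)) '' {μ | Finsupp.weight (wt k n) μ = d}) := by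
  rw [piece, weightedHomogeneousSubmodule_eq_finsupp_supported,
    AddMonoidAlgebra.supported_eq_span_single]
  rfl

lemma piece_e_add_le_mulSpan (l : Fin k) (d : Fin k → ℕ) :
    piece K k n (e l + d) ≤ mulSpan K l (piece K k n d) := by
  rw [piece_eq_span, Submodule.span_le]
  rintro _ ⟨μ, hμ : Finsupp.weight (wt k n) μ = e l + d, rfl⟩
  have hsum : ∑ m : Fin (n l + 1), μ ⟨l, m⟩ ≠ 0 := by
    rw [← weight_wt_apply, hμ]
    simp [e]
  obtain ⟨m, -, hm⟩ := Finset.exists_ne_zero_of_sum_ne_zero hsum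
  set ν := μ - Finsupp.single (⟨l, m⟩ : Var k n) 1
  have hμν : μ = Finsupp.single ⟨l, m⟩ 1 + ν :=
    (add_tsub_cancel_of_le (Finsupp.single_le_iff.mpr (Nat.one_le_iff_ne_zero.mpr hm))).symm
  have hν : Finsupp.weight (wt k n) ν = d := by
    rw [hμν, map_add, Finsupp.weight_single, one_smul] at hμ
    exact add_left_cancel hμ
  refine Submodule.subset_span ⟨m, monomial ν 1, isWeightedHomogeneous_monomial _ _ _ hν, ?_⟩
  dsimp only
  rw [hμν, monomial_single_add, pow_one]

end Grading

section Dimension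

variable {K} {k : ℕ} {n : Fin k → ℕ}

noncomputable def monomialsEquiv (d : Fin k → ℕ) :
    {μ : Var k n →₀ ℕ | Finsupp.weight (wt k n) μ = d} ≃ Π i, Sym (Fin (n i + 1)) (d i) :=
  Equiv.trans (β := Π i, {τ : Fin (n i + 1) → ℕ // ∑ m, τ m = d i})
    { toFun μ i := ⟨fun m => μ.1 ⟨i, m⟩, by rw [← weight_wt_apply, μ.2]⟩
      invFun τ := ⟨Finsupp.equivFunOnFinite.symm fun v => (τ v.1).1 v.2,
        funext fun i => by rw [weight_wt_apply]; exact (τ i).2⟩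
      left_inv _ := by ext; rfl
      right_inv _ := rfl }
    (Equiv.piCongrRight fun i => (Sym.equivNatSumOfFintype _ _).symm)

instance (d : Fin k → ℕ) : Finite {μ : Var k n →₀ ℕ | Finsupp.weight (wt k n) μ = d} :=
  .of_equiv _ (monomialsEquiv d).symm

noncomputable def pieceEquivFinsupp (d : Fin k → ℕ) :
    piece K k n d ≃ₗ[K] ({μ : Var k n →₀ ℕ | Finsupp.weight (wt k n) μ = d} →₀ K) :=
  (LinearEquiv.ofEq _ _ (weightedHomogeneousSubmodule_eq_finsupp_supported K (wt k n) d)).trans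
    (AddMonoidAlgebra.supportedEquivFinsupp _)

instance (d : Fin k → ℕ) : FiniteDimensional K (piece K k n d) :=
  .equiv (pieceEquivFinsupp d).symm

lemma finrank_piece (d : Fin k → ℕ) : Module.finrank K (piece K k n d) = NN k n d := by
  rw [(pieceEquivFinsupp d).finrank_eq,
    Module.finrank_eq_nat_card_basis (Finsupp.basisSingleOne),
    Nat.card_congr (monomialsEquiv d), Nat.card_pi]
  refine Finset.prod_congr rfl fun i _ => ?_
  rw [Nat.card_eq_fintype_card, Sym.card_sym_eq_choose, Fintype.card_fin, add_right_comm,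
    Nat.add_sub_cancel]

end Dimension

section MulSpan

variable {K} {k : ℕ} {n : Fin k → ℕ} (l : Fin k)

lemma X_mul_mem_mulSpan {V : Submodule K (MvPolynomial (Var k n) K)} (m : Fin (n l + 1))
    {f : MvPolynomial (Var k n) K} (hf : f ∈ V) : X ⟨l, m⟩ * f ∈ mulSpan K l V :=
  Submodule.subset_span ⟨m, f, hf, rfl⟩

lemma mulSpan_le_iff {V W : Submodule K (MvPolynomial (Var k n) K)} :
    mulSpan K l V ≤ W ↔ ∀ m, ∀ f ∈ V, X ⟨l, m⟩ * f ∈ W := by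
  refine ⟨fun h m f hf => h (X_mul_mem_mulSpan l m hf), fun h => ?_⟩
  rw [mulSpan, Submodule.span_le]
  rintro _ ⟨m, f, hf, rfl⟩
  exact h m f hf

lemma mulSpan_mono {V W : Submodule K (MvPolynomial (Var k n) K)} (hVW : V ≤ W) :
    mulSpan K l V ≤ mulSpan K l W :=
  (mulSpan_le_iff l).2 fun m _ hf => X_mul_mem_mulSpan l m (hVW hf)

lemma mulSpan_sup_le (V W : Submodule K (MvPolynomial (Var k n) K)) :
    mulSpan K l (V ⊔ W) ≤ mulSpan K l V ⊔ mulSpan K l W := by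
  refine (mulSpan_le_iff l).2 fun m f hf => ?_
  obtain ⟨v, hv, w, hw, rfl⟩ := Submodule.mem_sup.1 hf
  rw [mul_add]
  exact Submodule.add_mem_sup (X_mul_mem_mulSpan l m hv) (X_mul_mem_mulSpan l m hw)

lemma mulSpan_map_mulLeft_le (L : MvPolynomial (Var k n) K)
    (V : Submodule K (MvPolynomial (Var k n) K)) :
    mulSpan K l (V.map (LinearMap.mulLeft K L)) ≤ (mulSpan K l V).map (LinearMap.mulLeft K L) := by
  refine (mulSpan_le_iff l).2 fun m _ ⟨f, hf, hLf⟩ => ⟨_, X_mul_mem_mulSpan l m hf, ?_⟩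
  rw [← hLf, LinearMap.mulLeft_apply, LinearMap.mulLeft_apply, mul_left_comm]

lemma mulSpan_piece_le (d : Fin k → ℕ) : mulSpan K l (piece K k n d) ≤ piece K k n (e l + d) :=
  (mulSpan_le_iff l).2 fun m _ hf => (X_mem_piece ⟨l, m⟩).mul hf

lemma mulSpan_idealPiece_le (I : Ideal (MvPolynomial (Var k n) K)) (d : Fin k → ℕ) :
    mulSpan K l (idealPiece K I d) ≤ idealPiece K I (e l + d) :=
  (mulSpan_le_iff l).2 fun m _ hf => ⟨I.mul_mem_left _ hf.1, (X_mem_piece ⟨l, m⟩).mul hf.2⟩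

end MulSpan

section Points

variable {K} {k : ℕ} {n : Fin k → ℕ} {s : ℕ}

def coords (p : PointRep K k n) : Var k n → K := fun v => p v.1 v.2

lemma eval_scale_of_mem_piece {d : Fin k → ℕ} {f : MvPolynomial (Var k n) K}
    (hf : f ∈ piece K k n d) (c : Fin k → K) (x : Var k n → K) :
    eval (fun v => c v.1 * x v) f = (∏ i, c i ^ d i) * eval x f := by
  rw [eval_eq', eval_eq', Finset.mul_sum]
  refine Finset.sum_congr rfl fun μ hμ => ?_
  have hμd : Finsupp.weight (wt k n) μ = d := hf (mem_support_iff.mp hμ)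
  have hc : ∏ v : Var k n, c v.1 ^ μ v = ∏ i, c i ^ d i := by
    rw [← Finset.univ_sigma_univ, Finset.prod_sigma]
    refine Finset.prod_congr rfl fun i _ => ?_
    rw [← hμd, weight_wt_apply]
    exact Finset.prod_pow_eq_pow_sum Finset.univ _ (c i)
  simp_rw [mul_pow, Finset.prod_mul_distrib, hc]
  ring

lemma mem_idealOfPoints_iff (P : Fin s → PointRep K k n) {d : Fin k → ℕ}
    {f : MvPolynomial (Var k n) K} (hf : f ∈ piece K k n d) :
    f ∈ idealOfPoints K P ↔ ∀ a, eval (coords (P a)) f = 0 := by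
  simp only [idealOfPoints, Ideal.mem_iInf, RingHom.mem_ker]
  exact ⟨fun h a => (by simpa using h a 1 : eval (fun v => P a v.1 v.2) f = 0), fun h a c =>
    (eval_scale_of_mem_piece hf c (coords (P a))).trans (by rw [h a, mul_zero])⟩

noncomputable def evalMap (P : Fin s → PointRep K k n) (d : Fin k → ℕ) :
    piece K k n d →ₗ[K] Fin s → K :=
  LinearMap.pi fun a => (aeval (coords (P a))).toLinearMap ∘ₗ (piece K k n d).subtype

lemma evalMap_apply (P : Fin s → PointRep K k n) (d : Fin k → ℕ) (f : piece K k n d)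
    (a : Fin s) : evalMap P d f a = eval (coords (P a)) f :=
  rfl

lemma idealPiece_eq_map_ker (P : Fin s → PointRep K k n) (d : Fin k → ℕ) :
    idealPiece K (idealOfPoints K P) d =
      (LinearMap.ker (evalMap P d)).map (piece K k n d).subtype := by
  ext f
  simp only [idealPiece, Submodule.mem_inf, Submodule.restrictScalars_mem, Submodule.mem_map,
    LinearMap.mem_ker, funext_iff, evalMap_apply, Pi.zero_apply]
  constructor
  · rintro ⟨hI, hf⟩
    exact ⟨⟨f, hf⟩, (mem_idealOfPoints_iff P hf).1 hI, rfl⟩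
  · rintro ⟨⟨f, hf⟩, h0, rfl⟩
    exact ⟨(mem_idealOfPoints_iff P hf).2 h0, hf⟩

lemma hilbert_eq_finrank_range (P : Fin s → PointRep K k n) (d : Fin k → ℕ) :
    hilbert K P d = Module.finrank K (LinearMap.range (evalMap P d)) := by
  have := LinearMap.finrank_range_add_finrank_ker (evalMap P d)
  rw [hilbert, idealPiece_eq_map_ker, Submodule.finrank_map_subtype_eq, ← finrank_piece (K := K)]
  omega

end Points

section LinearForm

variable {K} {k : ℕ} {n : Fin k → ℕ} (l : Fin k)

noncomputable def linForm (lam : Fin (n l + 1) → K) : MvPolynomial (Var k n) K :=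
  ∑ m, lam m • X ⟨l, m⟩

lemma linForm_mem_piece (lam : Fin (n l + 1) → K) : linForm l lam ∈ piece K k n (e l) :=
  Submodule.sum_mem _ fun m _ => Submodule.smul_mem _ _ (X_mem_piece ⟨l, m⟩)

lemma eval_linForm (lam : Fin (n l + 1) → K) (x : Var k n → K) :
    eval x (linForm l lam) = ∑ m, lam m * x ⟨l, m⟩ := by
  simp [linForm, smul_eval]

lemma linForm_mul_mem_mulSpan (lam : Fin (n l + 1) → K)
    {V : Submodule K (MvPolynomial (Var k n) K)} {f : MvPolynomial (Var k n) K} (hf : f ∈ V) :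
    linForm l lam * f ∈ mulSpan K l V := by
  rw [linForm, Finset.sum_mul]
  refine Submodule.sum_mem _ fun m _ => ?_
  rw [smul_mul_assoc, ← mul_smul_comm]
  exact X_mul_mem_mulSpan l m (V.smul_mem _ hf)

lemma exists_linForm_eval_ne_zero [Infinite K] {s : ℕ} {P : Fin s → PointRep K k n}
    (hP : ∀ a, IsRep K (P a)) : ∃ lam, ∀ a, eval (coords (P a)) (linForm l lam) ≠ 0 := by
  obtain ⟨φ, hφ⟩ :=
    Module.exists_dual_forall_apply_ne_zero (K := K) (fun a => P a l) fun a => hP a l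
  refine ⟨fun m => φ fun j => if m = j then 1 else 0, fun a => ?_⟩
  rw [eval_linForm]
  convert hφ a using 1
  rw [LinearMap.pi_apply_eq_sum_univ φ (P a l)]
  simp [coords, mul_comm]

end LinearForm

section Stability

variable {K} {k : ℕ} {n : Fin k → ℕ} {s : ℕ} (P : Fin s → PointRep K k n)
  {L : MvPolynomial (Var k n) K} {c : Fin k → ℕ}

lemma mem_idealOfPoints_of_mul_mem (hL : L ∈ piece K k n c)
    (hLP : ∀ a, eval (coords (P a)) L ≠ 0) {d : Fin k → ℕ} {q : MvPolynomial (Var k n) K}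
    (hq : q ∈ piece K k n d) (hLq : L * q ∈ idealOfPoints K P) : q ∈ idealOfPoints K P := by
  refine (mem_idealOfPoints_iff P hq).2 fun a => ?_
  have := (mem_idealOfPoints_iff P (hL.mul hq)).1 hLq a
  rw [map_mul] at this
  exact (mul_eq_zero.1 this).resolve_left (hLP a)

lemma piece_add_le_map_mulLeft_sup_idealPiece (hL : L ∈ piece K k n c)
    (hLP : ∀ a, eval (coords (P a)) L ≠ 0) {d : Fin k → ℕ}
    (hH : hilbert K P (c + d) = hilbert K P d) :
    piece K k n (c + d) ≤
      (piece K k n d).map (LinearMap.mulLeft K L) ⊔ idealPiece K (idealOfPoints K P) (c + d) := by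
  let mulL : piece K k n d →ₗ[K] piece K k n (c + d) :=
    (LinearMap.mulLeft K L).restrict fun _ hf => hL.mul hf
  let D : (Fin s → K) ≃ₗ[K] (Fin s → K) :=
    LinearEquiv.piCongrRight fun a => LinearEquiv.smulOfNeZero K K _ (hLP a)
  have hcomm : evalMap P (c + d) ∘ₗ mulL = D ∘ₗ evalMap P d := by
    ext f a
    exact map_mul (eval (coords (P a))) L f
  have hrange :
      LinearMap.range (evalMap P (c + d) ∘ₗ mulL) = LinearMap.range (evalMap P (c + d)) := by
    refine Submodule.eq_of_le_of_finrank_eq (LinearMap.range_comp_le_range _ _) ?_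
    rw [hcomm, LinearMap.range_comp, LinearEquiv.finrank_map_eq, ← hilbert_eq_finrank_range,
      ← hilbert_eq_finrank_range, hH]
  intro g hg
  obtain ⟨f, hf⟩ : evalMap P (c + d) ⟨g, hg⟩ ∈ LinearMap.range (evalMap P (c + d) ∘ₗ mulL) :=
    hrange ▸ LinearMap.mem_range_self _ _
  have hker : ⟨g, hg⟩ - mulL f ∈ LinearMap.ker (evalMap P (c + d)) := by
    rw [LinearMap.mem_ker, map_sub, ← hf, LinearMap.comp_apply, sub_self]
  rw [← add_sub_cancel (L * f) g]
  refine Submodule.add_mem_sup ⟨f, f.2, rfl⟩ ?_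
  rw [idealPiece_eq_map_ker]
  exact ⟨_, hker, rfl⟩

lemma idealPiece_le_mulSpan_of_hilbert_eq [Infinite K] (hP : ∀ a, IsRep K (P a)) (l : Fin k)
    (d : Fin k → ℕ) (hH : hilbert K P (e l + d) = hilbert K P d) :
    idealPiece K (idealOfPoints K P) (e l + (e l + d)) ≤
      mulSpan K l (idealPiece K (idealOfPoints K P) (e l + d)) := by
  obtain ⟨lam, hlam⟩ := exists_linForm_eval_ne_zero l hP
  set L := linForm l lam
  set I := idealOfPoints K P
  have hle : piece K k n (e l + (e l + d)) ≤
      (piece K k n (e l + d)).map (LinearMap.mulLeft K L) ⊔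
        mulSpan K l (idealPiece K I (e l + d)) :=
    calc piece K k n (e l + (e l + d))
        ≤ mulSpan K l (piece K k n (e l + d)) := piece_e_add_le_mulSpan l _
      _ ≤ mulSpan K l ((piece K k n d).map (LinearMap.mulLeft K L) ⊔ idealPiece K I (e l + d)) :=
        mulSpan_mono l (piece_add_le_map_mulLeft_sup_idealPiece P (linForm_mem_piece l lam) hlam hH)
      _ ≤ mulSpan K l ((piece K k n d).map (LinearMap.mulLeft K L)) ⊔
            mulSpan K l (idealPiece K I (e l + d)) := mulSpan_sup_le l _ _
      _ ≤ _ := sup_le_sup_right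
        ((mulSpan_map_mulLeft_le l L _).trans (Submodule.map_mono (mulSpan_piece_le l d))) _
  intro h hh
  obtain ⟨_, ⟨q, hq, rfl⟩, r, hr, rfl⟩ := Submodule.mem_sup.1 (hle hh.2)
  have hrI : r ∈ I := (mulSpan_idealPiece_le l I _ hr).1
  have hqI : q ∈ I := mem_idealOfPoints_of_mul_mem P (linForm_mem_piece l lam) hlam hq
    (by simpa using I.sub_mem hh.1 hrI)
  exact Submodule.add_mem _ (linForm_mul_mem_mulSpan l lam ⟨hqI, hq⟩) hr

end Stability

theorem no_generator_of_stable_general (K : Type) [Field K] [IsAlgClosed K]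
    (k : ℕ) (n : Fin k → ℕ) {s : ℕ} (P : Fin s → PointRep K k n)
    (hP : SPoints K P) (l : Fin k) (j : Fin k → ℕ) (hj : 2 ≤ j l)
    (h2 : hilbert K P (j - e l) = hilbert K P (j - e l - e l)) :
    idealPiece K (idealOfPoints K P) j
      = mulSpan K l (idealPiece K (idealOfPoints K P) (j - e l)) := by
  obtain ⟨d, rfl⟩ : ∃ d, j = e l + (e l + d) := by
    refine ⟨j - e l - e l, funext fun i => ?_⟩
    by_cases hi : i = l
    · subst hi
      simp only [Pi.add_apply, Pi.sub_apply, e, Pi.single_eq_same]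
      omega
    · simp [e, Pi.single_eq_of_ne hi]
  simp only [add_tsub_cancel_left] at h2 ⊢
  exact le_antisymm (idealPiece_le_mulSpan_of_hilbert_eq P hP.1 l d h2)
    (mulSpan_idealPiece_le l _ _)

theorem no_generator_of_stable (K : Type) [Field K] [IsAlgClosed K] [CharZero K]
    (k : ℕ) (n : Fin k → ℕ) {s : ℕ} (P : Fin s → PointRep K k n)
    (hP : SPoints K P) (l : Fin k) (j : Fin k → ℕ) (hj : 2 ≤ j l)
    (h1 : hilbert K P j = hilbert K P (j - e l))
    (h2 : hilbert K P (j - e l) = hilbert K P (j - e l - e l)) :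
    idealPiece K (idealOfPoints K P) j
      = mulSpan K l (idealPiece K (idealOfPoints K P) (j - e l)) :=
  no_generator_of_stable_general K k n P hP l j hj h2

end MultiProjPoints
end

section
/- Let n_1 ≤ ⋯ ≤ n_k, s ≥ 1, l minimal with binom(n_1+l, l) ≥ s, and j = (j_1,...,j_k) ∈ N^k with j_1 = l - 1 and j_m > 0 for some m ≥ 2. Then ∏_{i=1}^k binom(n_i + j_i, j_i) ≥ binom(n_1 + l, l). -/
open MvPolynomial

namespace MultiProjPoints

variable (K : Type) [Field K]

theorem NN_ge_of_coord (k : ℕ) (n : Fin (k + 1) → ℕ) (hn : ∀ i, 1 ≤ n i)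
    (hmono : Monotone n) (s l : ℕ) (hs : 1 ≤ s)
    (hl : s ≤ (n 0 + l).choose l) (hlmin : ∀ l' < l, (n 0 + l').choose l' < s)
    (j : Fin (k + 1) → ℕ) (hj0 : j 0 = l - 1)
    (m : Fin (k + 1)) (hm : m ≠ 0) (hjm : 0 < j m) :
    (n 0 + l).choose l ≤ ∏ i, (n i + j i).choose (j i) := by
  have hpos : ∀ i : Fin (k + 1), 0 < (n i + j i).choose (j i) :=
    fun i => Nat.choose_pos (Nat.le_add_left _ _)
  rcases Nat.eq_zero_or_pos l with hl0 | hlpos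
  · subst hl0
    simpa using Finset.one_le_prod' fun i _ => hpos i
  -- l ≥ 1
  have h0m : (0 : Fin (k + 1)) ≠ m := fun h => hm h.symm
  have hsub : ({0, m} : Finset (Fin (k + 1))) ⊆ Finset.univ := Finset.subset_univ _
  have hpair : (∏ i ∈ ({0, m} : Finset (Fin (k + 1))), (n i + j i).choose (j i))
      ≤ ∏ i, (n i + j i).choose (j i) :=
    Finset.prod_le_prod_of_subset_of_one_le' hsub fun i _ _ => hpos i
  rw [Finset.prod_pair h0m] at hpair
  refine le_trans ?_ hpair
  -- factor at m: choose (n m + j m) (j m) ≥ n m + 1 ≥ n 0 + 1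
  have hfm : n 0 + 1 ≤ (n m + j m).choose (j m) := by
    have h1 : (n m + j m).choose (j m) = (n m + j m).choose (n m) :=
      (Nat.choose_symm_add).symm ▸ rfl
    have h2 : (n m + 1).choose (n m) ≤ (n m + j m).choose (n m) :=
      Nat.choose_le_choose _ (by omega)
    have h3 : (n m + 1).choose (n m) = n m + 1 := Nat.choose_succ_self_right _
    have h4 : n 0 ≤ n m := hmono (Fin.zero_le m)
    omega
  -- (n 0 + l).choose l ≤ (n 0 + (l-1)).choose (l-1) * (n 0 + 1)
  have hkey : (n 0 + l).choose l ≤ (n 0 + (l - 1)).choose (l - 1) * (n 0 + 1) := by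
    obtain ⟨l', rfl⟩ : ∃ l', l = l' + 1 := ⟨l - 1, by omega⟩
    have hid : (n 0 + l') + 1 > 0 := by omega
    -- succ_mul_choose_eq : succ n * n.choose k = (n+1).choose (k+1) * (k+1)
    have h := Nat.add_one_mul_choose_eq (n 0 + l') l'
    -- h : (n 0 + l' + 1) * (n 0 + l').choose l' = (n 0 + l' + 1).choose (l' + 1) * (l' + 1)
    have hle : (n 0 + l' + 1) ≤ (l' + 1) * (n 0 + 1) := by nlinarith
    have := Nat.mul_le_mul_right ((n 0 + l').choose l') hle
    rw [h] at this
    have hmul : (n 0 + (l' + 1)).choose (l' + 1) * (l' + 1)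
        ≤ ((n 0 + (l' + 1 - 1)).choose (l' + 1 - 1) * (n 0 + 1)) * (l' + 1) := by
      simp only [Nat.add_sub_cancel]
      calc (n 0 + (l' + 1)).choose (l' + 1) * (l' + 1)
          ≤ (l' + 1) * (n 0 + 1) * ((n 0 + l').choose l') := by
            rw [show n 0 + (l' + 1) = (n 0 + l').succ by omega]; exact this
        _ = (n 0 + l').choose l' * (n 0 + 1) * (l' + 1) := by ring
    exact Nat.le_of_mul_le_mul_right hmul (by omega)
  calc (n 0 + l).choose l
      ≤ (n 0 + (l - 1)).choose (l - 1) * (n 0 + 1) := hkey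
    _ ≤ (n 0 + j 0).choose (j 0) * (n m + j m).choose (j m) := by
        rw [hj0]; exact Nat.mul_le_mul_left _ hfm

end MultiProjPoints
end

section
/- Let X be a non-degenerate set of s points in generic position in P^{n_1} × ⋯ × P^{n_k}, and let j ∈ N^k with L_j = {l} and s = N(j − e_l) − 1. Then dim_k W_j = n_l + 1, where W_j = R_{e_l}(I_X)_{j−e_l}; equivalently, if F spans the 1-dimensional space (I_X)_{j-e_l}, then x_{l,0}F,...,x_{l,n_l}F are linearly independent. -/
open MvPolynomial

namespace MultiProjPoints

variable (K : Type) [Field K]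

private lemma lin_indep_X_mul (K : Type) [Field K] (k : ℕ) (n : Fin k → ℕ) (l : Fin k)
    (f : MvPolynomial (Var k n) K) (hf : f ≠ 0) :
    LinearIndependent K (fun m : Fin (n l + 1) => X (⟨l, m⟩ : Var k n) * f) := by
  rw [Fintype.linearIndependent_iff]
  intro c hc m0
  have h : (∑ m, c m • X (⟨l, m⟩ : Var k n)) * f = 0 := by
    rw [Finset.sum_mul]
    simpa [smul_mul_assoc] using hc
  have hg : (∑ m, c m • X (⟨l, m⟩ : Var k n) : MvPolynomial (Var k n) K) = 0 := by
    rcases mul_eq_zero.mp h with h' | h'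
    · exact h'
    · exact absurd h' hf
  have := congrArg (coeff (Finsupp.single (⟨l, m0⟩ : Var k n) 1)) hg
  classical
  simpa [coeff_sum, coeff_X', Finsupp.single_left_inj, Finset.sum_ite_eq'] using this

set_option synthInstance.maxHeartbeats 1000000 in
theorem dim_W_of_one_dimensional (K : Type) [Field K] [IsAlgClosed K] [CharZero K]
    (k : ℕ) (n : Fin k → ℕ) {s : ℕ} (hnd : ∀ i, n i < s)
    (P : Fin s → PointRep K k n) (hgen : GenericPosition K P)
    (j : Fin k → ℕ) (l : Fin k)
    (hl : 1 ≤ j l ∧ j - e l ∈ Dset k n s)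
    (hunique : ∀ m : Fin k, m ≠ l → ¬ (1 ≤ j m ∧ j - e m ∈ Dset k n s))
    (hs : s = NN k n (j - e l) - 1) :
    Module.finrank K (mulSpan K l (idealPiece K (idealOfPoints K P) (j - e l)))
      = n l + 1 := by
  classical
  set d := j - e l with hd
  have hsN : s < NN k n d := hl.2.1
  have hH := hgen.2 d
  rw [min_eq_right hsN.le] at hH
  unfold hilbert at hH
  have hr : Module.finrank K (idealPiece K (idealOfPoints K P) d) = 1 := by
    have hs1 : 0 < s := Nat.lt_of_le_of_lt (Nat.zero_le _) (hnd l)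
    rw [hd] at hsN hH hs ⊢
    omega
  obtain ⟨v, hv0, hv⟩ := finrank_eq_one_iff'.mp hr
  set f : MvPolynomial (Var k n) K := (v : MvPolynomial (Var k n) K) with hfdef
  have hf0 : f ≠ 0 := fun h => hv0 (Subtype.ext h)
  have hspan : mulSpan K l (idealPiece K (idealOfPoints K P) d)
      = Submodule.span K (Set.range fun m : Fin (n l + 1) => X (⟨l, m⟩ : Var k n) * f) := by
    apply le_antisymm
    · rw [mulSpan, Submodule.span_le]
      rintro g ⟨m, f', hf', rfl⟩
      obtain ⟨c, hc⟩ := hv ⟨f', hf'⟩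
      have hc' : c • f = f' := congrArg Subtype.val hc
      rw [← hc', mul_smul_comm]
      exact Submodule.smul_mem _ c (Submodule.subset_span ⟨m, rfl⟩)
    · rw [Submodule.span_le]
      rintro g ⟨m, rfl⟩
      exact Submodule.subset_span ⟨m, f, v.2, rfl⟩
  rw [hspan, finrank_span_eq_card (lin_indep_X_mul K k n l f hf0), Fintype.card_fin]


end MultiProjPoints
end
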